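/- Let L be a finite join-semidistributive lattice and let j be a join-irreducible element of L such that K(j) has no greatest element. Let X be the set of join-irreducible elements j' ≠ j such that {j, j'} is a face of the canonical join complex. Let A be a nonempty antichain contained in X with ⋁A ∨ j = ⋁A ∨ j_* that is minimal in join-refinement among all antichains Y ⊆ X with ⋁Y ∨ j = ⋁Y ∨ j_*. Then A is minimal with this property among all antichains in 𝒜_j: every antichain B ∈ 𝒜_j with ⋁B ∨ j = ⋁B ∨ j_* that join-refines A equals A. -/

import Mathlib

universe u v

def JoinSemidistrib (α : Type*) [Lattice α] : Prop :=
  ∀ x y z : α, x ⊔ y = x ⊔ z → x ⊔ (y ⊓ z) = x ⊔ y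

def MeetSemidistrib (α : Type*) [Lattice α] : Prop :=
  ∀ x y z : α, x ⊓ y = x ⊓ z → x ⊓ (y ⊔ z) = x ⊓ y

section JoinDefs

variable {α : Type*} [Lattice α] [OrderBot α]

/-- `j` is join-irreducible: not the bottom element, and `j = a ⊔ b` implies `j = a` or `j = b`. -/
def JoinIrred (j : α) : Prop :=
  j ≠ ⊥ ∧ ∀ a b : α, j = a ⊔ b → j = a ∨ j = b

/-- `A` join-refines `B`: every element of `A` is below some element of `B`. -/
def JoinRefines (A B : Finset α) : Prop :=
  ∀ a ∈ A, ∃ b ∈ B, a ≤ b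

/-- `A` is an irredundant join representation of `w`. -/
def IrredJoinRep (A : Finset α) (w : α) : Prop :=
  A.sup id = w ∧ ∀ A' ⊂ A, A'.sup id < w

/-- `A` is the canonical join representation of `w`: the irredundant join representation
of `w` that join-refines every irredundant join representation of `w`. -/
def CanonicalJoinRep (A : Finset α) (w : α) : Prop :=
  IrredJoinRep A w ∧ ∀ B : Finset α, IrredJoinRep B w → JoinRefines A B

/-- `A` joins canonically, i.e. `A` is a face of the canonical join complex. -/
def JoinsCanonically (A : Finset α) : Prop :=
  CanonicalJoinRep A (A.sup id)

/-- `j` is a canonical joinand of `w`. -/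
def CanonicalJoinand (j w : α) : Prop :=
  ∃ A : Finset α, CanonicalJoinRep A w ∧ j ∈ A

end JoinDefs

/-- The canonical join complex is flag: any finite set of join-irreducible elements all of
whose two-element subsets are faces is itself a face. -/
def FlagCanonicalJoinComplex (α : Type*) [Lattice α] [OrderBot α] [DecidableEq α] : Prop :=
  ∀ F : Finset α, (∀ j ∈ F, JoinIrred j) →
    (∀ j ∈ F, ∀ j' ∈ F, j ≠ j' → JoinsCanonically ({j, j'} : Finset α)) →
    JoinsCanonically F

/-- A lattice is crosscut-simplicial if for every `x ≤ y` and every proper subset `S` of the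
set of atoms of the interval `[x, y]` (elements `a` with `x ⋖ a` and `a ≤ y`), the join of `x`
with all elements of `S` is strictly less than `y`. -/
def CrosscutSimplicial (β : Type*) [Lattice β] : Prop :=
  ∀ x y : β, x ≤ y → ∀ S : Finset β,
    (∀ a ∈ S, x ⋖ a ∧ a ≤ y) →
    (∃ a : β, (x ⋖ a ∧ a ≤ y) ∧ a ∉ S) →
    S.fold (· ⊔ · : β → β → β) x id < y

section MeetDefs

variable {α : Type*} [Lattice α] [OrderTop α]

/-- `m` is meet-irreducible: not the top element, and `m = a ⊓ b` implies `m = a` or `m = b`. -/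
def MeetIrred (m : α) : Prop :=
  m ≠ ⊤ ∧ ∀ a b : α, m = a ⊓ b → m = a ∨ m = b

/-- `A` meet-refines `B`: every element of `A` is above some element of `B`. -/
def MeetRefines (A B : Finset α) : Prop :=
  ∀ a ∈ A, ∃ b ∈ B, b ≤ a

/-- `A` is an irredundant meet representation of `w`. -/
def IrredMeetRep (A : Finset α) (w : α) : Prop :=
  A.inf id = w ∧ ∀ A' ⊂ A, w < A'.inf id

/-- `A` is the canonical meet representation of `w`. -/
def CanonicalMeetRep (A : Finset α) (w : α) : Prop :=
  IrredMeetRep A w ∧ ∀ B : Finset α, IrredMeetRep B w → MeetRefines A B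

/-- `A` meets canonically, i.e. `A` is a face of the canonical meet complex. -/
def MeetsCanonically (A : Finset α) : Prop :=
  CanonicalMeetRep A (A.inf id)

end MeetDefs

/-- The canonical meet complex is flag. -/
def FlagCanonicalMeetComplex (α : Type*) [Lattice α] [OrderTop α] [DecidableEq α] : Prop :=
  ∀ F : Finset α, (∀ m ∈ F, MeetIrred m) →
    (∀ m ∈ F, ∀ m' ∈ F, m ≠ m' → MeetsCanonically ({m, m'} : Finset α)) →
    MeetsCanonically F

/-!
Among the antichains `B'` of `𝒜_j` with `j ≤ ⋁B' ⊔ j_*` that join-refine `B`, take one,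
`B₀`, minimal for join-refinement. Minimality forces every `b ∈ B₀` to be join-irreducible
(otherwise split it) and to satisfy `b ≰ j ⊔ b_*` (otherwise join-semidistributivity lets us
replace `b` by `b_*`). As `b` lies below some `a ∈ A` and `{j, a}` is a face, also
`j ≰ b ⊔ j_*`, and in a join-semidistributive lattice these two inequalities make `{j, b}` a
face. Hence `B₀ ⊆ X`, so `B₀ = A` by the minimality of `A`, and `B`, squeezed between `B₀` and
`A`, equals `A`.
-/

section JoinRefines

variable {α : Type*} [Lattice α]

theorem JoinRefines.trans {A B C : Finset α} (hAB : JoinRefines A B) (hBC : JoinRefines B C) :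
    JoinRefines A C := fun a ha => by
  obtain ⟨b, hb, hab⟩ := hAB a ha
  obtain ⟨c, hc, hbc⟩ := hBC b hb
  exact ⟨c, hc, hab.trans hbc⟩

theorem JoinRefines.antisymm {A B : Finset α}
    (hA : IsAntichain (· ≤ ·) (A : Set α)) (hB : IsAntichain (· ≤ ·) (B : Set α))
    (hAB : JoinRefines A B) (hBA : JoinRefines B A) : A = B := by
  have key : ∀ U V : Finset α, IsAntichain (· ≤ ·) (U : Set α) →
      JoinRefines U V → JoinRefines V U → U ⊆ V := by
    intro U V hU hUV hVU u hu
    obtain ⟨v, hv, huv⟩ := hUV u hu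
    obtain ⟨u', hu', hvu'⟩ := hVU v hv
    obtain rfl : u = u' := hU.eq hu hu' (huv.trans hvu')
    exact le_antisymm huv hvu' ▸ hv
  exact (key A B hA hAB hBA).antisymm (key B A hB hBA hAB)

theorem JoinRefines.sup_le [OrderBot α] {A B : Finset α} (h : JoinRefines A B) :
    A.sup id ≤ B.sup id :=
  Finset.sup_le fun a ha => by
    obtain ⟨b, hb, hab⟩ := h a ha
    exact hab.trans (Finset.le_sup (f := id) hb)

theorem joinRefines_iff_lowerClosure_le {A B : Finset α} :
    JoinRefines A B ↔ lowerClosure (A : Set α) ≤ lowerClosure (B : Set α) := by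
  simp only [lowerClosure_le, Set.subset_def, SetLike.mem_coe, mem_lowerClosure, JoinRefines]

theorem Finset.exists_antichain_subset_joinRefines (s : Finset α) :
    ∃ t ⊆ s, IsAntichain (· ≤ ·) (t : Set α) ∧ JoinRefines s t := by
  classical
  refine ⟨s.filter (Maximal (· ∈ s)), Finset.filter_subset _ _, ?_, fun x hx => ?_⟩
  · intro x hx y hy hne hxy
    exact hne ((Finset.mem_filter.mp hx).2.eq_of_le (Finset.mem_filter.mp hy).1 hxy)
  · obtain ⟨y, hxy, hy⟩ := s.exists_le_maximal hx
    exact ⟨y, Finset.mem_filter.mpr ⟨hy.1, hy⟩, hxy⟩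

theorem exists_joinRefines_minimal [Finite α] (P : Finset α → Prop) {B : Finset α} (hB : P B) :
    ∃ B₀, P B₀ ∧ JoinRefines B₀ B ∧
      ∀ B', P B' → JoinRefines B' B₀ → JoinRefines B₀ B' := by
  obtain ⟨B₀, ⟨hB₀, hB₀B⟩, hmin⟩ :=
    Set.Finite.exists_minimalFor (fun C : Finset α => lowerClosure (C : Set α))
      {C | P C ∧ JoinRefines C B} (Set.toFinite _) ⟨B, hB, fun b hb => ⟨b, hb, le_rfl⟩⟩
  refine ⟨B₀, hB₀, hB₀B, fun B' hB' hB'B₀ => ?_⟩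
  rw [joinRefines_iff_lowerClosure_le] at hB'B₀ ⊢
  exact hmin ⟨hB', (joinRefines_iff_lowerClosure_le.mpr hB'B₀).trans hB₀B⟩ hB'B₀

end JoinRefines

section JoinRepresentations

variable {α : Type*} [Lattice α] [OrderBot α]

theorem IrredJoinRep.isAntichain {C : Finset α} {w : α} (h : IrredJoinRep C w) :
    IsAntichain (· ≤ ·) (C : Set α) := by
  classical
  intro x hx y hy hne hxy
  have hsup : (C.erase x).sup id = C.sup id := by
    refine le_antisymm (Finset.sup_mono (C.erase_subset x)) (Finset.sup_le fun z hz => ?_)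
    obtain rfl | hzx := eq_or_ne z x
    · exact hxy.trans (Finset.le_sup (f := id) (Finset.mem_erase.mpr ⟨hne.symm, hy⟩))
    · exact Finset.le_sup (f := id) (Finset.mem_erase.mpr ⟨hzx, hz⟩)
  have := h.2 _ (Finset.erase_ssubset hx)
  rw [hsup, h.1] at this
  exact this.false

theorem Finset.exists_subset_irredJoinRep (D : Finset α) :
    ∃ D' ⊆ D, IrredJoinRep D' (D.sup id) := by
  obtain ⟨D', hD'D, hD'sup, hmin⟩ :=
    exists_minimal_le_of_wellFoundedLT (fun E : Finset α => E.sup id = D.sup id) D rfl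
  refine ⟨D', hD'D, hD'sup, fun E hE => ?_⟩
  refine lt_of_le_of_ne (hD'sup ▸ Finset.sup_mono hE.subset) fun hEsup => ?_
  exact hE.not_subset (hmin hEsup hE.subset)

theorem JoinIrred.le_of_lt_of_covBy {j jstar x : α} (hj : JoinIrred j) (hstar : jstar ⋖ j)
    (hx : x < j) : x ≤ jstar := by
  rcases hstar.eq_or_eq le_sup_right (sup_le hx.le hstar.le) with h | h
  · exact h ▸ le_sup_left
  · rcases hj.2 x jstar h.symm with h' | h'
    · exact absurd h' hx.ne'
    · exact absurd h' hstar.lt.ne'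

theorem JoinIrred.exists_lt_forall_lt_le [Finite α] {c : α} (hc : JoinIrred c) :
    ∃ cstar < c, ∀ x < c, x ≤ cstar := by
  obtain ⟨cstar, -, hcstar, hmax⟩ :=
    Finite.exists_le_maximal (p := (· < c)) (bot_lt_iff_ne_bot.mpr hc.1)
  refine ⟨cstar, hcstar, fun x hx => ?_⟩
  have hlt : x ⊔ cstar < c := by
    refine lt_of_le_of_ne (sup_le hx.le hcstar.le) fun h => ?_
    rcases hc.2 x cstar h.symm with h' | h'
    · exact hx.ne' h'
    · exact hcstar.ne' h'
  exact le_sup_left.trans (hmax hlt le_sup_right)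

end JoinRepresentations

section JoinSemidistrib

variable {α : Type*} [Lattice α] {j jstar : α}

theorem JoinSemidistrib.le_of_sup_eq_sup (hjsd : JoinSemidistrib α)
    (hj : ∀ x < j, x ≤ jstar) {x b : α} (hjb : ¬ j ≤ b) (hx : jstar ≤ x) (h : x ⊔ j = x ⊔ b) :
    j ≤ x := by
  have hjb_le : j ⊓ b ≤ x := (hj _ (inf_lt_left.mpr hjb)).trans hx
  have := hjsd x j b h
  rw [sup_eq_left.mpr hjb_le] at this
  exact le_sup_right.trans this.ge

theorem JoinSemidistrib.exists_le_of_le_sup [OrderBot α] [Finite α] (hjsd : JoinSemidistrib α)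
    (hj : ∀ x < j, x ≤ jstar) {v : α} (hv : jstar ≤ v) (hjv : ¬ j ≤ v) {D : Finset α}
    (hjD : j ≤ D.sup id) (hDv : D.sup id ≤ j ⊔ v) : ∃ d ∈ D, j ≤ d := by
  obtain ⟨v', hvv', ⟨-, hjv'⟩, hmax⟩ :=
    Finite.exists_le_maximal (p := fun y => v ≤ y ∧ ¬ j ≤ y) ⟨le_rfl, hjv⟩
  obtain ⟨d, hd, hdv'⟩ : ∃ d ∈ D, ¬ d ≤ v' := by
    by_contra! h
    exact hjv' (hjD.trans (Finset.sup_le h))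
  have hjdv' : j ≤ v' ⊔ d := by
    by_contra h
    exact hdv' (le_sup_right.trans (hmax ⟨hvv'.trans le_sup_left, h⟩ le_sup_left))
  have hdj : d ≤ v' ⊔ j :=
    (Finset.le_sup (f := id) hd).trans (hDv.trans (sup_comm j v ▸ sup_le_sup_right hvv' j))
  refine ⟨d, hd, by_contra fun hjd => hjv' ?_⟩
  exact hjsd.le_of_sup_eq_sup hj hjd (hv.trans hvv')
    (le_antisymm (sup_le le_sup_left hjdv') (sup_le le_sup_left hdj))

theorem JoinSemidistrib.joinsCanonically_pair [OrderBot α] [Finite α] [DecidableEq α]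
    (hjsd : JoinSemidistrib α) (hj : ∀ x < j, x ≤ jstar) {c cstar : α} (hc : ∀ x < c, x ≤ cstar)
    (hjc : ¬ j ≤ c ⊔ jstar) (hcj : ¬ c ≤ j ⊔ cstar) :
    JoinsCanonically ({j, c} : Finset α) := by
  have hsup : ({j, c} : Finset α).sup id = j ⊔ c := by simp
  have hj_lt : j < j ⊔ c := left_lt_sup.mpr fun h => hcj (h.trans le_sup_left)
  have hc_lt : c < j ⊔ c := right_lt_sup.mpr fun h => hjc (h.trans le_sup_left)
  rw [JoinsCanonically, hsup]
  refine ⟨⟨hsup, fun E hE => ?_⟩, fun D hD x hx => ?_⟩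
  · obtain ⟨y, hy, hyE⟩ := Finset.exists_of_ssubset hE
    have hE_sub : ∀ e ∈ E, e = j ∨ e = c := fun e he => by simpa using hE.subset he
    rcases (by simpa using hy : y = j ∨ y = c) with rfl | rfl
    · refine lt_of_le_of_lt (Finset.sup_le fun e he => ?_) hc_lt
      rcases hE_sub e he with rfl | rfl
      exacts [absurd he hyE, le_rfl]
    · refine lt_of_le_of_lt (Finset.sup_le fun e he => ?_) hj_lt
      rcases hE_sub e he with rfl | rfl
      exacts [le_rfl, absurd he hyE]
  · rcases (by simpa using hx : x = j ∨ x = c) with rfl | rfl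
    · exact hjsd.exists_le_of_le_sup hj le_sup_right hjc (hD.1 ▸ hj_lt.le)
        (hD.1 ▸ sup_le le_sup_left (le_sup_left.trans le_sup_right))
    · refine hjsd.exists_le_of_le_sup hc le_sup_right hcj (hD.1 ▸ hc_lt.le) ?_
      exact hD.1 ▸ sup_le (le_sup_left.trans le_sup_right) le_sup_left

end JoinSemidistrib

section AbsorbingAntichain

variable {α : Type*} [Lattice α] [OrderBot α] {j jstar : α}

-- `B ∈ 𝒜_j` with `⋁B ⊔ j = ⋁B ⊔ j_*`, the equation being written as `j ≤ ⋁B ⊔ j_*`.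
def IsAbsorbingAntichain (j jstar : α) (B : Finset α) : Prop :=
  j ∉ B ∧ IsAntichain (· ≤ ·) (insert j (B : Set α)) ∧ j ≤ B.sup id ⊔ jstar

def IsMinimalAbsorbingAntichain (j jstar : α) (B : Finset α) : Prop :=
  IsAbsorbingAntichain j jstar B ∧
    ∀ B', IsAbsorbingAntichain j jstar B' → JoinRefines B' B → JoinRefines B B'

theorem IsAbsorbingAntichain.isAntichain {B : Finset α} (hB : IsAbsorbingAntichain j jstar B) :
    IsAntichain (· ≤ ·) (B : Set α) :=
  hB.2.1.subset (Set.subset_insert _ _)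

theorem IsAbsorbingAntichain.incomparable {B : Finset α} (hB : IsAbsorbingAntichain j jstar B)
    {b : α} (hb : b ∈ B) : ¬ j ≤ b ∧ ¬ b ≤ j := by
  have hjb : j ≠ b := fun h => hB.1 (h ▸ hb)
  exact ⟨hB.2.1 (Set.mem_insert _ _) (Set.mem_insert_of_mem _ hb) hjb,
    hB.2.1 (Set.mem_insert_of_mem _ hb) (Set.mem_insert _ _) hjb.symm⟩

theorem exists_isAbsorbingAntichain_joinRefines (hj : ∀ x < j, x ≤ jstar) {B N : Finset α}
    (hB : ∀ b ∈ B, ¬ j ≤ b) (hNB : JoinRefines N B) (hN : j ≤ N.sup id ⊔ jstar) :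
    ∃ B', IsAbsorbingAntichain j jstar B' ∧ JoinRefines B' N := by
  classical
  obtain ⟨B', hB'N, hB'anti, hNB'⟩ :=
    (N.filter fun y => ¬ y ≤ jstar).exists_antichain_subset_joinRefines
  have hB'mem : ∀ y ∈ B', y ∈ N ∧ ¬ y ≤ jstar := fun y hy => Finset.mem_filter.mp (hB'N hy)
  have hnot_j_le : ∀ y ∈ B', ¬ j ≤ y := fun y hy hjy => by
    obtain ⟨b, hb, hyb⟩ := hNB y (hB'mem y hy).1
    exact hB b hb (hjy.trans hyb)
  have hsup : N.sup id ≤ B'.sup id ⊔ jstar := Finset.sup_le fun y hy => by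
    by_cases hy' : y ≤ jstar
    · exact hy'.trans le_sup_right
    · exact (hNB' y (Finset.mem_filter.mpr ⟨hy, hy'⟩)).elim fun z ⟨hz, hyz⟩ =>
        hyz.trans ((Finset.le_sup (f := id) hz).trans le_sup_left)
  refine ⟨B', ⟨fun hj' => hnot_j_le j hj' le_rfl, ?_, ?_⟩,
    fun y hy => ⟨y, (hB'mem y hy).1, le_rfl⟩⟩
  · refine hB'anti.insert (fun y hy _ hyj => (hB'mem y hy).2 (hj y ?_))
      (fun y hy _ => hnot_j_le y hy)
    exact lt_of_le_of_ne hyj fun h => hnot_j_le y hy h.ge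
  · exact hN.trans (sup_le hsup le_sup_right)

theorem exists_isMinimalAbsorbingAntichain_joinRefines [Finite α] {B : Finset α}
    (hB : IsAbsorbingAntichain j jstar B) :
    ∃ B₀, IsMinimalAbsorbingAntichain j jstar B₀ ∧ JoinRefines B₀ B := by
  obtain ⟨B₀, hB₀, hB₀B, hmin⟩ := exists_joinRefines_minimal (IsAbsorbingAntichain j jstar) hB
  exact ⟨B₀, ⟨hB₀, hmin⟩, hB₀B⟩

variable [DecidableEq α]

theorem Finset.sup_sup_erase_id {B : Finset α} {b : α} (hb : b ∈ B) :
    b ⊔ (B.erase b).sup id = B.sup id := by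
  conv_rhs => rw [← Finset.insert_erase hb, Finset.sup_insert]
  rfl

-- Otherwise an antichain extracted from `P ∪ (B \ {b})` would strictly join-refine `B`.
theorem IsMinimalAbsorbingAntichain.not_le_sup_of_forall_lt (hj : ∀ x < j, x ≤ jstar)
    {B : Finset α} (hB : IsMinimalAbsorbingAntichain j jstar B) {b : α} (hb : b ∈ B)
    {P : Finset α} (hP : ∀ p ∈ P, p < b) : ¬ j ≤ (P ∪ B.erase b).sup id ⊔ jstar := by
  intro hjN
  have hNB : JoinRefines (P ∪ B.erase b) B := fun y hy => by
    rcases Finset.mem_union.mp hy with hyP | hyB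
    · exact ⟨b, hb, (hP y hyP).le⟩
    · exact ⟨y, Finset.mem_of_mem_erase hyB, le_rfl⟩
  obtain ⟨B', hB', hB'N⟩ := exists_isAbsorbingAntichain_joinRefines hj
    (fun b' hb' => (hB.1.incomparable hb').1) hNB hjN
  obtain ⟨y, hy, hby⟩ := hB.2 B' hB' (hB'N.trans hNB) b hb
  obtain ⟨n, hn, hyn⟩ := hB'N y hy
  rcases Finset.mem_union.mp hn with hnP | hnB
  · exact (hP n hnP).not_ge (hby.trans hyn)
  · exact Finset.ne_of_mem_erase hnB
      (hB.1.isAntichain.eq hb (Finset.mem_of_mem_erase hnB) (hby.trans hyn)).symm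

theorem IsMinimalAbsorbingAntichain.joinIrred (hj : ∀ x < j, x ≤ jstar) {B : Finset α}
    (hB : IsMinimalAbsorbingAntichain j jstar B) {b : α} (hb : b ∈ B) : JoinIrred b := by
  refine ⟨fun hb_bot => (hB.1.incomparable hb).2 (hb_bot ▸ bot_le), fun p q hpq => ?_⟩
  by_contra! hne
  have hp : p < b := lt_of_le_of_ne (hpq ▸ le_sup_left) hne.1.symm
  have hq : q < b := lt_of_le_of_ne (hpq ▸ le_sup_right) hne.2.symm
  refine hB.not_le_sup_of_forall_lt hj hb (P := {p, q}) (by simp [hp, hq]) ?_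
  have : ({p, q} ∪ B.erase b).sup id = B.sup id := by
    rw [Finset.sup_union, ← Finset.sup_sup_erase_id hb, hpq]
    simp
  exact this ▸ hB.1.2.2

theorem IsMinimalAbsorbingAntichain.not_le_sup_of_lt (hjsd : JoinSemidistrib α)
    (hj : ∀ x < j, x ≤ jstar) {B : Finset α} (hB : IsMinimalAbsorbingAntichain j jstar B)
    {b p : α} (hb : b ∈ B) (hp : p < b) : ¬ b ≤ j ⊔ p := by
  intro hbjp
  refine hB.not_le_sup_of_forall_lt hj hb (P := {p}) (by simpa using hp) ?_
  set x := ({p} ∪ B.erase b).sup id ⊔ jstar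
  have hxb : x ⊔ b = B.sup id ⊔ jstar := by
    rw [← Finset.sup_sup_erase_id hb]
    simp only [x, Finset.sup_union, Finset.sup_singleton, id]
    rw [sup_right_comm _ jstar, sup_right_comm p, sup_eq_right.mpr hp.le]
  refine hjsd.le_of_sup_eq_sup hj (hB.1.incomparable hb).1 le_sup_right
    (le_antisymm (sup_le le_sup_left ?_) (sup_le le_sup_left ?_))
  · exact hxb ▸ hB.1.2.2
  · have hpx : p ≤ x := (Finset.le_sup (f := id) (by simp)).trans le_sup_left
    exact hbjp.trans (sup_le le_sup_right (hpx.trans le_sup_left))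

end AbsorbingAntichain

theorem JoinsCanonically.not_le_sup_of_lt {α : Type*} [Lattice α] [OrderBot α] [DecidableEq α]
    {j a jstar : α} (hface : JoinsCanonically ({j, a} : Finset α)) (hne : j ≠ a)
    (hjstar : jstar < j) : ¬ j ≤ a ⊔ jstar := by
  intro hj
  have hja : ¬ j ≤ a := hface.1.isAntichain (by simp) (by simp) hne
  have hsup : ({a, jstar} : Finset α).sup id = ({j, a} : Finset α).sup id := by
    simpa using le_antisymm (sup_le le_sup_right (hjstar.le.trans le_sup_left))
      (sup_le hj le_sup_left)
  obtain ⟨D, hD, hDrep⟩ := Finset.exists_subset_irredJoinRep ({a, jstar} : Finset α)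
  obtain ⟨d, hd, hjd⟩ := hface.2 D (hsup ▸ hDrep) j (by simp)
  rcases (by simpa using hD hd : d = a ∨ d = jstar) with rfl | rfl
  exacts [hja hjd, hjstar.not_ge hjd]

theorem stmt_13_general {α : Type*} [Lattice α] [OrderBot α] [Fintype α] [DecidableEq α]
    (hjsd : JoinSemidistrib α) (j jstar : α) (hj : JoinIrred j) (hstar : jstar ⋖ j)
    (X : Set α)
    (hX : ∀ j' : α, j' ∈ X ↔
      JoinIrred j' ∧ j' ≠ j ∧ JoinsCanonically ({j, j'} : Finset α))
    (A : Finset α) (hAX : ↑A ⊆ X)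
    (hAanti : IsAntichain (· ≤ ·) (↑A : Set α))
    (hAmin : ∀ Y : Finset α, ↑Y ⊆ X → IsAntichain (· ≤ ·) (↑Y : Set α) →
      Y.sup id ⊔ j = Y.sup id ⊔ jstar → JoinRefines Y A → Y = A) :
    ∀ B : Finset α, j ∉ B → IsAntichain (· ≤ ·) (↑B : Set α) →
      IsAntichain (· ≤ ·) (insert j (↑B : Set α)) →
      B.sup id ⊔ j = B.sup id ⊔ jstar → JoinRefines B A → B = A := by
  intro B hjB hBanti hBjanti hBeq hBA
  have hbelow : ∀ x < j, x ≤ jstar := fun x hx => hj.le_of_lt_of_covBy hstar hx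
  obtain ⟨B₀, hB₀, hB₀B⟩ := exists_isMinimalAbsorbingAntichain_joinRefines
    ⟨hjB, hBjanti, (sup_eq_sup_iff_left.mp hBeq).1⟩
  have hB₀A : JoinRefines B₀ A := hB₀B.trans hBA
  have hB₀X : ↑B₀ ⊆ X := by
    intro b hb
    have hbJI := hB₀.joinIrred hbelow hb
    obtain ⟨bstar, hbstar, hbbelow⟩ := hbJI.exists_lt_forall_lt_le
    obtain ⟨a, ha, hba⟩ := hB₀A b hb
    obtain ⟨-, haj, hja⟩ := (hX a).mp (hAX ha)
    have hjb : ¬ j ≤ b ⊔ jstar := fun h =>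
      hja.not_le_sup_of_lt haj.symm hstar.lt (h.trans (sup_le_sup_right hba _))
    refine (hX b).mpr ⟨hbJI, fun h => (hB₀.1.incomparable hb).1 h.ge, ?_⟩
    exact hjsd.joinsCanonically_pair hbelow hbbelow hjb
      (hB₀.not_le_sup_of_lt hjsd hbelow hb hbstar)
  have hB₀eq : B₀ = A := hAmin B₀ hB₀X hB₀.1.isAntichain
    (sup_eq_sup_iff_left.mpr ⟨hB₀.1.2.2, hstar.le.trans le_sup_right⟩) hB₀A
  subst hB₀eq
  exact JoinRefines.antisymm hBanti hAanti hBA hB₀B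

/-- Lemma (minimal means canonical): if `A ⊆ X` is a nonempty antichain with
`⋁A ⊔ j = ⋁A ⊔ j_*`, minimal in join-refinement among antichains contained in `X` with this
property, then `A` is minimal with this property among all antichains in `𝒜_j`. -/
theorem stmt_13 {α : Type*} [Lattice α] [OrderBot α] [Fintype α] [DecidableEq α]
    (hjsd : JoinSemidistrib α) (j jstar : α) (hj : JoinIrred j) (hstar : jstar ⋖ j)
    (hk : ¬ ∃ m : α, IsGreatest {a : α | jstar ≤ a ∧ ¬ j ≤ a} m)
    (X : Set α)
    (hX : ∀ j' : α, j' ∈ X ↔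
      JoinIrred j' ∧ j' ≠ j ∧ JoinsCanonically ({j, j'} : Finset α))
    (A : Finset α) (hAne : A.Nonempty) (hAX : ↑A ⊆ X)
    (hAanti : IsAntichain (· ≤ ·) (↑A : Set α))
    (hAeq : A.sup id ⊔ j = A.sup id ⊔ jstar)
    (hAmin : ∀ Y : Finset α, ↑Y ⊆ X → IsAntichain (· ≤ ·) (↑Y : Set α) →
      Y.sup id ⊔ j = Y.sup id ⊔ jstar → JoinRefines Y A → Y = A) :
    ∀ B : Finset α, j ∉ B → IsAntichain (· ≤ ·) (↑B : Set α) →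
      IsAntichain (· ≤ ·) (insert j (↑B : Set α)) →
      B.sup id ⊔ j = B.sup id ⊔ jstar → JoinRefines B A → B = A :=
  stmt_13_general hjsd j jstar hj hstar X hX A hAX hAanti hAmin
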